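/- arXiv:1605.01177 — 4 statements merged into one kernel-verified Lean document; each statement's English description precedes it below -/
import Mathlib

section
/- The function d(X,Y) defined on subsets of R^N with at most one element by d({x},{y}) = min(c, d_b(x,y)), d(∅,∅) = 0, and d(X,Y) = c/2^(1/p) otherwise, is a metric on the collection of subsets of R^N of cardinality at most one, where d_b is a metric on R^N, c > 0 and 1 ≤ p < ∞. -/
/-- Subsets of ℝ^N with at most one element, modelled as `Option (Fin N → ℝ)`
(`none` for the empty set, `some x` for the singleton `{x}`). -/
noncomputable def dOpt {N : ℕ} (db : (Fin N → ℝ) → (Fin N → ℝ) → ℝ) (c p : ℝ) :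
    Option (Fin N → ℝ) → Option (Fin N → ℝ) → ℝ
  | some x, some y => min c (db x y)
  | none, none => 0
  | _, _ => c / (2 : ℝ) ^ (1 / p)

/-! Truncating at `c` keeps the triangle inequality, and a point is at distance
`c / 2^(1/p) ≥ c / 2` from `∅`, so the path through `∅` is never shorter than `c`. -/

theorem min_le_min_add_min {c a b e : ℝ} (ha : 0 ≤ a) (hb : 0 ≤ b) (hc : 0 ≤ c)
    (he : e ≤ a + b) : min c e ≤ min c a + min c b := by
  rcases le_total c a with hca | hac
  · linarith [min_le_left c e, min_eq_left hca, le_min hc hb]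
  rcases le_total c b with hcb | hbc
  · linarith [min_le_left c e, min_eq_left hcb, le_min hc ha]
  rw [min_eq_right hac, min_eq_right hbc]
  exact (min_le_right c e).trans he

theorem two_rpow_one_div_le_two {p : ℝ} (hp : 1 ≤ p) : (2 : ℝ) ^ (1 / p) ≤ 2 := by
  calc (2 : ℝ) ^ (1 / p) ≤ 2 ^ (1 : ℝ) :=
        Real.rpow_le_rpow_of_exponent_le one_le_two
          ((div_le_one (one_pos.trans_le hp)).2 hp)
    _ = 2 := Real.rpow_one 2

theorem le_div_two_rpow_add_self {c p : ℝ} (hc : 0 ≤ c) (hp : 1 ≤ p) :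
    c ≤ c / (2 : ℝ) ^ (1 / p) + c / (2 : ℝ) ^ (1 / p) := by
  have h : c / 2 ≤ c / (2 : ℝ) ^ (1 / p) :=
    div_le_div_of_nonneg_left hc (by positivity) (two_rpow_one_div_le_two hp)
  linarith

section dOpt

variable {N : ℕ} {db : (Fin N → ℝ) → (Fin N → ℝ) → ℝ} {c p : ℝ}

theorem dOpt_nonneg (hc : 0 ≤ c) (hdb_nonneg : ∀ x y, 0 ≤ db x y)
    (X Y : Option (Fin N → ℝ)) : 0 ≤ dOpt db c p X Y := by
  rcases X with _ | x <;> rcases Y with _ | y <;> simp only [dOpt]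
  all_goals first | exact le_rfl | positivity | exact le_min hc (hdb_nonneg x y)

theorem dOpt_eq_zero_iff (hc : 0 < c) (hdb_eq : ∀ x y, db x y = 0 ↔ x = y)
    (X Y : Option (Fin N → ℝ)) : dOpt db c p X Y = 0 ↔ X = Y := by
  have hk : c / (2 : ℝ) ^ (1 / p) ≠ 0 := by positivity
  rcases X with _ | x <;> rcases Y with _ | y <;>
    simp only [dOpt, reduceCtorEq, iff_false, Option.some.injEq]
  case none.some | some.none => exact hk
  rw [min_eq_iff, ← hdb_eq x y]
  constructor
  · rintro (⟨rfl, -⟩ | ⟨h, -⟩)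
    exacts [absurd rfl hc.ne', h]
  · intro h
    exact Or.inr ⟨h, h ▸ hc.le⟩

theorem dOpt_comm (hdb_symm : ∀ x y, db x y = db y x) (X Y : Option (Fin N → ℝ)) :
    dOpt db c p X Y = dOpt db c p Y X := by
  rcases X with _ | x <;> rcases Y with _ | y <;> simp only [dOpt, hdb_symm]

theorem dOpt_triangle (hc : 0 < c) (hp : 1 ≤ p) (hdb_nonneg : ∀ x y, 0 ≤ db x y)
    (hdb_tri : ∀ x y z, db x z ≤ db x y + db y z) (X Y Z : Option (Fin N → ℝ)) :
    dOpt db c p X Z ≤ dOpt db c p X Y + dOpt db c p Y Z := by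
  have hXY := dOpt_nonneg (p := p) hc.le hdb_nonneg X Y
  have hYZ := dOpt_nonneg (p := p) hc.le hdb_nonneg Y Z
  rcases X with _ | x <;> rcases Y with _ | y <;> rcases Z with _ | z <;>
    simp only [dOpt] at hXY hYZ ⊢
  case some.none.some =>
    exact (min_le_left c (db x z)).trans (le_div_two_rpow_add_self hc.le hp)
  case some.some.some =>
    exact min_le_min_add_min (hdb_nonneg x y) (hdb_nonneg y z) hc.le (hdb_tri x y z)
  all_goals linarith

end dOpt

/-- The base distance `d` of Definition 1 is a metric on the collection of
subsets of ℝ^N with at most one element. -/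
theorem base_distance_is_metric {N : ℕ} (db : (Fin N → ℝ) → (Fin N → ℝ) → ℝ)
    (c p : ℝ) (hc : 0 < c) (hp : 1 ≤ p)
    (hdb_nonneg : ∀ x y, 0 ≤ db x y)
    (hdb_eq : ∀ x y, db x y = 0 ↔ x = y)
    (hdb_symm : ∀ x y, db x y = db y x)
    (hdb_tri : ∀ x y z, db x z ≤ db x y + db y z) :
    (∀ X Y : Option (Fin N → ℝ), 0 ≤ dOpt db c p X Y) ∧
    (∀ X Y : Option (Fin N → ℝ), dOpt db c p X Y = 0 ↔ X = Y) ∧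
    (∀ X Y : Option (Fin N → ℝ), dOpt db c p X Y = dOpt db c p Y X) ∧
    (∀ X Y Z : Option (Fin N → ℝ),
      dOpt db c p X Z ≤ dOpt db c p X Y + dOpt db c p Y Z) :=
  ⟨dOpt_nonneg hc.le hdb_nonneg, dOpt_eq_zero_iff hc hdb_eq, dOpt_comm hdb_symm,
    dOpt_triangle hc hp hdb_nonneg hdb_tri⟩
end

section
/- Let W_{XZ} and W_{ZY} be (n_X+1)×(n_Z+1) and (n_Z+1)×(n_Y+1) nonnegative matrices whose rows indexed 1..n_X (resp. 1..n_Z) sum to 1 and columns indexed 1..n_Z (resp. 1..n_Y) sum to 1. Define W_{XY}(i,j) = Σ_{l=1}^{n_Z} W_{XZ}(i,l) W_{ZY}(l,j) for i ≤ n_X, j ≤ n_Y, with W_{XY}(i, n_Y+1) = 1 − Σ_{j=1}^{n_Y} W_{XY}(i,j), W_{XY}(n_X+1, j) = 1 − Σ_{i=1}^{n_X} W_{XY}(i,j), and W_{XY}(n_X+1, n_Y+1) = 0. Then W_{XY} is also a nonnegative matrix with rows 1..n_X summing to 1 and columns 1..n_Y summing to 1. -/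
open Finset

/-- The relaxed assignment polytope `W̄`: nonnegative `(m+1) × (n+1)` matrices
whose columns `1..n` sum to `1`, whose rows `1..m` sum to `1`, and whose
bottom-right entry is `0`. -/
def memWbar {m n : ℕ} (W : Matrix (Fin (m + 1)) (Fin (n + 1)) ℝ) : Prop :=
  (∀ i j, 0 ≤ W i j) ∧
  (∀ j : Fin n, ∑ i, W i j.castSucc = 1) ∧
  (∀ i : Fin m, ∑ j, W i.castSucc j = 1) ∧
  W (Fin.last m) (Fin.last n) = 0

/-- The composition of two relaxed assignment matrices (Eq. (32)) is again a
relaxed assignment matrix. -/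
theorem composition_memWbar {nX nZ nY : ℕ}
    (WXZ : Matrix (Fin (nX + 1)) (Fin (nZ + 1)) ℝ)
    (WZY : Matrix (Fin (nZ + 1)) (Fin (nY + 1)) ℝ)
    (WXY : Matrix (Fin (nX + 1)) (Fin (nY + 1)) ℝ)
    (hXZ : memWbar WXZ) (hZY : memWbar WZY)
    (hreal : ∀ (i : Fin nX) (j : Fin nY),
      WXY i.castSucc j.castSucc =
        ∑ l : Fin nZ, WXZ i.castSucc l.castSucc * WZY l.castSucc j.castSucc)
    (hrow : ∀ i : Fin nX,
      WXY i.castSucc (Fin.last nY) = 1 - ∑ j : Fin nY, WXY i.castSucc j.castSucc)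
    (hcol : ∀ j : Fin nY,
      WXY (Fin.last nX) j.castSucc = 1 - ∑ i : Fin nX, WXY i.castSucc j.castSucc)
    (hcorner : WXY (Fin.last nX) (Fin.last nY) = 0) :
    memWbar WXY := by
  obtain ⟨hXZpos, hXZcol, hXZrow, hXZ0⟩ := hXZ
  obtain ⟨hZYpos, hZYcol, hZYrow, hZY0⟩ := hZY
  -- partial-row/column bounds
  have hXZrow' : ∀ i : Fin nX, ∑ l : Fin nZ, WXZ i.castSucc l.castSucc ≤ 1 := by
    intro i
    have h := hXZrow i
    rw [Fin.sum_univ_castSucc] at h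
    have := hXZpos i.castSucc (Fin.last nZ)
    linarith
  have hZYrow' : ∀ l : Fin nZ, ∑ j : Fin nY, WZY l.castSucc j.castSucc ≤ 1 := by
    intro l
    have h := hZYrow l
    rw [Fin.sum_univ_castSucc] at h
    have := hZYpos l.castSucc (Fin.last nY)
    linarith
  have hXZcol' : ∀ l : Fin nZ, ∑ i : Fin nX, WXZ i.castSucc l.castSucc ≤ 1 := by
    intro l
    have h := hXZcol l
    rw [Fin.sum_univ_castSucc] at h
    have := hXZpos (Fin.last nX) l.castSucc
    linarith
  have hZYcol' : ∀ j : Fin nY, ∑ l : Fin nZ, WZY l.castSucc j.castSucc ≤ 1 := by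
    intro j
    have h := hZYcol j
    rw [Fin.sum_univ_castSucc] at h
    have := hZYpos (Fin.last nZ) j.castSucc
    linarith
  have hint : ∀ (i : Fin nX) (j : Fin nY), 0 ≤ WXY i.castSucc j.castSucc := by
    intro i j
    rw [hreal i j]
    exact Finset.sum_nonneg fun l _ =>
      mul_nonneg (hXZpos _ _) (hZYpos _ _)
  have hrowsum_le : ∀ i : Fin nX, ∑ j : Fin nY, WXY i.castSucc j.castSucc ≤ 1 := by
    intro i
    have heq : ∑ j : Fin nY, WXY i.castSucc j.castSucc
        = ∑ l : Fin nZ, WXZ i.castSucc l.castSucc *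
            ∑ j : Fin nY, WZY l.castSucc j.castSucc := by
      simp only [hreal, Finset.mul_sum]
      exact Finset.sum_comm
    rw [heq]
    calc ∑ l : Fin nZ, WXZ i.castSucc l.castSucc *
            ∑ j : Fin nY, WZY l.castSucc j.castSucc
        ≤ ∑ l : Fin nZ, WXZ i.castSucc l.castSucc := by
          apply Finset.sum_le_sum
          intro l _
          have := hZYrow' l
          nlinarith [hXZpos i.castSucc l.castSucc]
      _ ≤ 1 := hXZrow' i
  have hcolsum_le : ∀ j : Fin nY, ∑ i : Fin nX, WXY i.castSucc j.castSucc ≤ 1 := by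
    intro j
    have heq : ∑ i : Fin nX, WXY i.castSucc j.castSucc
        = ∑ l : Fin nZ, (∑ i : Fin nX, WXZ i.castSucc l.castSucc) *
            WZY l.castSucc j.castSucc := by
      simp only [hreal, Finset.sum_mul]
      exact Finset.sum_comm
    rw [heq]
    calc ∑ l : Fin nZ, (∑ i : Fin nX, WXZ i.castSucc l.castSucc) *
            WZY l.castSucc j.castSucc
        ≤ ∑ l : Fin nZ, WZY l.castSucc j.castSucc := by
          apply Finset.sum_le_sum
          intro l _
          have := hXZcol' l
          nlinarith [hZYpos l.castSucc j.castSucc]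
      _ ≤ 1 := hZYcol' j
  refine ⟨?_, ?_, ?_, hcorner⟩
  · intro i j
    induction i using Fin.lastCases with
    | last =>
      induction j using Fin.lastCases with
      | last => rw [hcorner]
      | cast j =>
        rw [hcol j]
        have := hcolsum_le j
        linarith
    | cast i =>
      induction j using Fin.lastCases with
      | last =>
        rw [hrow i]
        have := hrowsum_le i
        linarith
      | cast j => exact hint i j
  · intro j
    rw [Fin.sum_univ_castSucc, hcol j]
    ring
  · intro i
    rw [Fin.sum_univ_castSucc, hrow i]
    ring
end

section
/- The multi-dimensional assignment distance d_p^{(c,γ)}(X,Y) of Definition 5 is symmetric: d_p^{(c,γ)}(X,Y) = d_p^{(c,γ)}(Y,X) for all finite sets of trajectories X, Y. -/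
open Finset

/-- A trajectory in ℝ^N: a start time `ω`, a length `ν` and a sequence of
states. -/
structure Traj (N : ℕ) where
  ω : ℕ
  ν : ℕ
  x : Fin ν → (Fin N → ℝ)

/-- The (possibly empty) state of the trajectory at time `k`. -/
def tau {N : ℕ} (X : Traj N) (k : ℕ) : Option (Fin N → ℝ) :=
  if h : X.ω ≤ k ∧ k < X.ω + X.ν then some (X.x ⟨k - X.ω, by omega⟩) else none

/-- Switch cost between two (possibly unassigned) assignments. -/
noncomputable def sw {nY : ℕ} : Option (Fin nY) → Option (Fin nY) → ℝ
  | some a, some b => if a = b then 0 else 1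
  | none, none => 0
  | _, _ => 1 / 2

/-- An assignment vector: each trajectory of `X` is assigned at most one
trajectory of `Y`, injectively on assigned values. -/
def validAssign {nX nY : ℕ} (π : Fin nX → Option (Fin nY)) : Prop :=
  ∀ i i' j, π i = some j → π i' = some j → i = i'

/-- Total cost (localization + missed/false + switching) of a sequence of
assignment vectors, Eq. (8). -/
noncomputable def assignCost {N nX nY : ℕ} (db : (Fin N → ℝ) → (Fin N → ℝ) → ℝ)
    (c γ p : ℝ) (T : ℕ) (X : Fin nX → Traj N) (Y : Fin nY → Traj N)
    (π : ℕ → Fin nX → Option (Fin nY)) : ℝ :=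
  (∑ k ∈ Finset.range T,
    ((∑ i, (dOpt db c p (tau (X i) k)
        (Option.bind (π k i) fun j => tau (Y j) k)) ^ p) +
      ∑ j ∈ Finset.univ.filter (fun j : Fin nY => ∀ i, π k i ≠ some j),
        (dOpt db c p none (tau (Y j) k)) ^ p)) +
  γ ^ p * ∑ k ∈ Finset.range (T - 1), ∑ i, sw (π k i) (π (k + 1) i)

/-- The multi-dimensional assignment distance of Definition 5. -/
noncomputable def mdDist {N nX nY : ℕ} (db : (Fin N → ℝ) → (Fin N → ℝ) → ℝ)
    (c γ p : ℝ) (T : ℕ) (X : Fin nX → Traj N) (Y : Fin nY → Traj N) : ℝ :=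
  sInf { v | ∃ π : ℕ → Fin nX → Option (Fin nY),
    (∀ k, validAssign (π k)) ∧ v = (assignCost db c γ p T X Y π) ^ (1 / p) }


/-!
A valid assignment vector is the forward map of a partial bijection `Fin nX ≃. Fin nY`, so
transposing (`PEquiv.symm`) identifies assignments `X → Y` with assignments `Y → X`. This
preserves the cost of each time step: matched pairs stay matched, and tracks of `X` left
unassigned become the unassigned tracks of the other direction, and vice versa. It also
preserves the switching cost, since `sw a b` is half the number of `j` on which `a = some j` and
`b = some j` disagree, a count over pairs `(i, j)` that does not depend on the direction; a full
switch in one direction is two half switches in the other.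
-/

namespace validAssign

variable {nX nY : ℕ} {π : Fin nX → Option (Fin nY)}

noncomputable def toPEquiv (hπ : validAssign π) : Fin nX ≃. Fin nY where
  toFun := π
  invFun j := if h : ∃ i, π i = some j then some h.choose else none
  inv i j := by
    constructor
    · intro h
      split_ifs at h with hj
      · obtain rfl := Option.some_injective _ h
        exact hj.choose_spec
    · intro h
      have hj : ∃ i, π i = some j := ⟨i, h⟩
      rw [dif_pos hj, hπ _ _ _ hj.choose_spec h]

end validAssign

theorem validAssign_coe {nX nY : ℕ} (e : Fin nX ≃. Fin nY) : validAssign ⇑e := by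
  intro i i' j hi hi'
  rw [← e.eq_some_iff] at hi hi'
  exact Option.some_injective _ (hi.symm.trans hi')

theorem mdDist_eq_sInf_range {N nX nY : ℕ} (db : (Fin N → ℝ) → (Fin N → ℝ) → ℝ)
    (c γ p : ℝ) (T : ℕ) (X : Fin nX → Traj N) (Y : Fin nY → Traj N) :
    mdDist db c γ p T X Y = sInf (Set.range fun e : ℕ → Fin nX ≃. Fin nY =>
      assignCost db c γ p T X Y (fun k => e k) ^ (1 / p)) := by
  refine congrArg sInf (Set.ext fun v => ⟨?_, ?_⟩)
  · rintro ⟨π, hπ, rfl⟩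
    exact ⟨fun k => (hπ k).toPEquiv, rfl⟩
  · rintro ⟨e, rfl⟩
    exact ⟨fun k => e k, fun k => validAssign_coe (e k), rfl⟩

theorem sum_apply_option_eq {α β M : Type*} [Fintype α] [Fintype β] [DecidableEq β]
    [AddCommMonoid M] (π : α → Option β) (F : α → Option β → M) :
    ∑ a, F a (π a) = ∑ a, ∑ b, (if π a = some b then F a (some b) else 0) +
      ∑ a ∈ univ.filter (fun a => π a = none), F a none := by
  rw [sum_filter, ← sum_add_distrib]
  refine sum_congr rfl fun a _ => ?_
  cases π a <;> simp

section stepCost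

variable {α β V : Type*} [Fintype α] [Fintype β] [DecidableEq α] [DecidableEq β]

def stepCost (f : Option V → Option V → ℝ) (x : α → Option V) (y : β → Option V)
    (e : α ≃. β) : ℝ :=
  ∑ a, f (x a) ((e a).bind y) + ∑ b ∈ univ.filter (fun b => e.symm b = none), f none (y b)

theorem stepCost_symm {f : Option V → Option V → ℝ} (hf : ∀ u v, f u v = f v u)
    (x : α → Option V) (y : β → Option V) (e : α ≃. β) :
    stepCost f y x e.symm = stepCost f x y e := by
  unfold stepCost
  rw [sum_apply_option_eq (fun a => e a) (fun a o => f (x a) (o.bind y)),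
    sum_apply_option_eq (fun b => e.symm b) (fun b o => f (y b) (o.bind x)), sum_comm]
  simp only [PEquiv.eq_some_iff, PEquiv.symm_symm, Option.bind_some, Option.bind_none,
    hf none, hf (y _) (x _)]
  rw [add_right_comm]
  -- the two sides now differ only in the `Decidable` instances of the `if`s
  congr

end stepCost

theorem dOpt_symm {N : ℕ} {db : (Fin N → ℝ) → (Fin N → ℝ) → ℝ} (hdb : ∀ x y, db x y = db y x)
    {c p : ℝ} (u v : Option (Fin N → ℝ)) : dOpt db c p u v = dOpt db c p v u := by
  cases u <;> cases v <;> simp [dOpt, hdb]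

theorem sw_eq_sum {n : ℕ} (a b : Option (Fin n)) :
    sw a b = ∑ j, if (a = some j ↔ b = some j) then 0 else 1 / 2 := by
  rcases a with _ | a <;> rcases b with _ | b <;> simp [sw]
  split_ifs with hab
  · simp [hab]
  · have hsplit : ∀ j, (if (a = j ↔ b = j) then (0 : ℝ) else 2⁻¹) =
        (if a = j then 2⁻¹ else 0) + (if b = j then 2⁻¹ else 0) := by
      intro j
      by_cases ha : a = j <;> by_cases hb : b = j <;> simp_all
    simp only [hsplit, sum_add_distrib, sum_ite_eq, mem_univ, if_true]
    norm_num

theorem sum_sw_symm {m n : ℕ} (e e' : Fin m ≃. Fin n) :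
    ∑ j, sw (e.symm j) (e'.symm j) = ∑ i, sw (e i) (e' i) := by
  simp only [sw_eq_sum, PEquiv.eq_some_iff]
  exact sum_comm

theorem assignCost_eq_sum_stepCost {N nX nY : ℕ} (db : (Fin N → ℝ) → (Fin N → ℝ) → ℝ)
    (c γ p : ℝ) (T : ℕ) (X : Fin nX → Traj N) (Y : Fin nY → Traj N)
    (e : ℕ → Fin nX ≃. Fin nY) :
    assignCost db c γ p T X Y (fun k => e k) =
      ∑ k ∈ range T, stepCost (fun u v => dOpt db c p u v ^ p)
          (fun i => tau (X i) k) (fun j => tau (Y j) k) (e k) +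
        γ ^ p * ∑ k ∈ range (T - 1), ∑ i, sw (e k i) (e (k + 1) i) := by
  unfold assignCost stepCost
  congr 1
  refine sum_congr rfl fun k _ => congrArg _ (sum_congr ?_ fun _ _ => rfl)
  refine filter_congr fun j _ => ?_
  simp only [Option.eq_none_iff_forall_ne_some, ne_eq, PEquiv.eq_some_iff]

theorem assignCost_symm {N nX nY : ℕ} {db : (Fin N → ℝ) → (Fin N → ℝ) → ℝ}
    (hdb : ∀ x y, db x y = db y x) (c γ p : ℝ) (T : ℕ)
    (X : Fin nX → Traj N) (Y : Fin nY → Traj N) (e : ℕ → Fin nX ≃. Fin nY) :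
    assignCost db c γ p T Y X (fun k => (e k).symm) = assignCost db c γ p T X Y (fun k => e k) := by
  have hf : ∀ u v, dOpt db c p u v ^ p = dOpt db c p v u ^ p := fun u v => by
    rw [dOpt_symm hdb]
  rw [assignCost_eq_sum_stepCost, assignCost_eq_sum_stepCost]
  simp only [stepCost_symm hf, sum_sw_symm]

theorem mdDist_symm_general {N nX nY : ℕ} (db : (Fin N → ℝ) → (Fin N → ℝ) → ℝ)
    (c γ p : ℝ)
    (hdb_symm : ∀ x y, db x y = db y x)
    (T : ℕ) (X : Fin nX → Traj N) (Y : Fin nY → Traj N) :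
    mdDist db c γ p T X Y = mdDist db c γ p T Y X := by
  have hsymm : Function.Surjective fun (e : ℕ → Fin nX ≃. Fin nY) k => (e k).symm :=
    fun e => ⟨fun k => (e k).symm, rfl⟩
  rw [mdDist_eq_sInf_range, mdDist_eq_sInf_range, ← hsymm.range_comp]
  simp only [Function.comp_def, assignCost_symm hdb_symm]

/-- The multi-dimensional assignment distance is symmetric. -/
theorem mdDist_symm {N nX nY : ℕ} (db : (Fin N → ℝ) → (Fin N → ℝ) → ℝ)
    (c γ p : ℝ) (hc : 0 < c) (hγ : 0 < γ) (hp : 1 ≤ p)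
    (hdb_nonneg : ∀ x y, 0 ≤ db x y)
    (hdb_eq : ∀ x y, db x y = 0 ↔ x = y)
    (hdb_symm : ∀ x y, db x y = db y x)
    (hdb_tri : ∀ x y z, db x z ≤ db x y + db y z)
    (T : ℕ) (X : Fin nX → Traj N) (Y : Fin nY → Traj N) :
    mdDist db c γ p T X Y = mdDist db c γ p T Y X :=
  mdDist_symm_general db c γ p hdb_symm T X Y
end

section
/- For any W_{XZ} ∈ W̄_{X,Z} and W_{ZY} ∈ W̄_{Z,Y}, and the composed matrix W_{XY} ∈ W̄_{X,Y} of Eq. (32), the per-time-step localization cost satisfies tr[(D^k_{X,Y})ᵀ W_{XY}] ≤ tr[(D^k_{X,Z})ᵀ W_{XZ}] + tr[(D^k_{Z,Y})ᵀ W_{ZY}] whenever p = 1 and the base distance satisfies the triangle inequality d^k_{X,Y}(i,j) ≤ d^k_{X,Z}(i,l) + d^k_{Z,Y}(l,j) for all i, l, j (including unassigned indices, with d^k_{X,Y}(n_X+1, j) = d^k_{Z,Y}(n_Z+1, j) and d^k_{X,Y}(i, n_Y+1) = d^k_{X,Z}(i, n_Z+1)). -/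
open Finset

/-!
Through the assigned indices `l` of `Z`, the plan `W_XZ(i,l) W_ZY(l,j)` is a nonnegative
coupling of `W_XZ` and `W_ZY` on those columns and rows, so with the triangle inequality its
`d_XY`-cost is at most the sum of their costs on assigned `l`. The row and column sums identify
`W_XY` with this plan up to boundary mass `W_XZ(i,∅)` in the unassigned column and `W_ZY(∅,j)` in
the unassigned row, which the identities `d_XY(i,∅) = d_XZ(i,∅)` and `d_XY(∅,j) = d_ZY(∅,j)`
charge exactly to the unassigned-`l` terms of the two costs. The only mass the plan carries that
`W_XY` does not sits in the corner, where it costs something nonnegative.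
-/

theorem Matrix.sum_mul_apply_right_of_sum_eq_one {ι κ μ : Type*} [Fintype κ] [Fintype μ]
    (P : Matrix ι κ ℝ) {Q : Matrix κ μ ℝ}
    (hQ : ∀ k, ∑ j, Q k j = 1) (i : ι) : ∑ j, (P * Q) i j = ∑ k, P i k := by
  simp only [Matrix.mul_apply]
  rw [Finset.sum_comm]
  simp [← Finset.mul_sum, hQ]

theorem Matrix.sum_mul_apply_left_of_sum_eq_one {ι κ μ : Type*} [Fintype ι] [Fintype κ]
    {P : Matrix ι κ ℝ} (Q : Matrix κ μ ℝ)
    (hP : ∀ k, ∑ i, P i k = 1) (j : μ) : ∑ i, (P * Q) i j = ∑ k, Q k j := by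
  simp only [Matrix.mul_apply]
  rw [Finset.sum_comm]
  simp [← Finset.sum_mul, hP]

theorem sum_cost_mul_le {ι κ μ : Type*} [Fintype ι] [Fintype κ] [Fintype μ]
    (c : ι → μ → ℝ) (a : ι → κ → ℝ) (b : κ → μ → ℝ)
    {P : Matrix ι κ ℝ} {Q : Matrix κ μ ℝ} (htri : ∀ i k j, c i j ≤ a i k + b k j)
    (hP : ∀ i k, 0 ≤ P i k) (hQ : ∀ k j, 0 ≤ Q k j)
    (hPcol : ∀ k, ∑ i, P i k = 1) (hQrow : ∀ k, ∑ j, Q k j = 1) :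
    ∑ i, ∑ j, c i j * (P * Q) i j ≤
      ∑ i, ∑ k, a i k * P i k + ∑ k, ∑ j, b k j * Q k j := by
  calc ∑ i, ∑ j, c i j * (P * Q) i j
      = ∑ i, ∑ j, ∑ k, c i j * (P i k * Q k j) := by
        simp only [Matrix.mul_apply, Finset.mul_sum]
    _ ≤ ∑ i, ∑ j, ∑ k, (a i k + b k j) * (P i k * Q k j) := by
        gcongr with i _ j _ k _
        · exact mul_nonneg (hP i k) (hQ k j)
        · exact htri i k j
    _ = ∑ i, ∑ k, a i k * P i k * ∑ j, Q k j +
          ∑ k, ∑ j, b k j * Q k j * ∑ i, P i k := by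
        simp only [add_mul, Finset.sum_add_distrib, Finset.mul_sum, mul_assoc]
        congr 1
        · exact Finset.sum_congr rfl fun i _ => Finset.sum_comm
        · rw [Finset.sum_comm, Finset.sum_congr rfl fun j _ => Finset.sum_comm,
            Finset.sum_comm]
          simp only [mul_comm (P _ _) (Q _ _)]
    _ = ∑ i, ∑ k, a i k * P i k + ∑ k, ∑ j, b k j * Q k j := by
        simp only [hPcol, hQrow, mul_one]

section AssignedComp

variable {m k n : ℕ} {P : Matrix (Fin (m + 1)) (Fin (k + 1)) ℝ}
  {Q : Matrix (Fin (k + 1)) (Fin (n + 1)) ℝ}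

variable (P Q) in
def assignedComp : Matrix (Fin (m + 1)) (Fin (n + 1)) ℝ :=
  P.submatrix id Fin.castSucc * Q.submatrix Fin.castSucc id

theorem assignedComp_nonneg (hP : memWbar P) (hQ : memWbar Q) (i j) :
    0 ≤ assignedComp P Q i j := by
  rw [assignedComp, Matrix.mul_apply]
  exact Finset.sum_nonneg fun l _ => mul_nonneg (hP.1 i l.castSucc) (hQ.1 l.castSucc j)

theorem sum_cost_assignedComp_le (c : Fin (m + 1) → Fin (n + 1) → ℝ)
    (a : Fin (m + 1) → Fin (k + 1) → ℝ) (b : Fin (k + 1) → Fin (n + 1) → ℝ)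
    (htri : ∀ i l j, c i j ≤ a i l + b l j) (hP : memWbar P) (hQ : memWbar Q) :
    ∑ i, ∑ j, c i j * assignedComp P Q i j ≤
      ∑ i, ∑ l : Fin k, a i l.castSucc * P i l.castSucc +
        ∑ l : Fin k, ∑ j, b l.castSucc j * Q l.castSucc j :=
  sum_cost_mul_le c (fun i (l : Fin k) => a i l.castSucc) (fun (l : Fin k) j => b l.castSucc j)
    (fun i l j => htri i l.castSucc j) (fun i l => hP.1 i l.castSucc)
    (fun l j => hQ.1 l.castSucc j) hP.2.1 hQ.2.2.1

variable {W : Matrix (Fin (m + 1)) (Fin (n + 1)) ℝ}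

theorem apply_castSucc_last_eq_of_assignedComp (hP : memWbar P) (hQ : memWbar Q)
    (hreal : ∀ (i : Fin m) (j : Fin n),
      W i.castSucc j.castSucc = assignedComp P Q i.castSucc j.castSucc)
    (hrow : ∀ i : Fin m, W i.castSucc (Fin.last n) = 1 - ∑ j : Fin n, W i.castSucc j.castSucc)
    (i : Fin m) :
    W i.castSucc (Fin.last n) =
      P i.castSucc (Fin.last k) + assignedComp P Q i.castSucc (Fin.last n) := by
  have hcomp : ∑ j, assignedComp P Q i.castSucc j = ∑ l : Fin k, P i.castSucc l.castSucc :=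
    Matrix.sum_mul_apply_right_of_sum_eq_one _ hQ.2.2.1 i.castSucc
  have hProw := hP.2.2.1 i
  rw [Fin.sum_univ_castSucc] at hcomp hProw
  rw [hrow i, Finset.sum_congr rfl fun j _ => hreal i j]
  linarith

theorem apply_last_castSucc_eq_of_assignedComp (hP : memWbar P) (hQ : memWbar Q)
    (hreal : ∀ (i : Fin m) (j : Fin n),
      W i.castSucc j.castSucc = assignedComp P Q i.castSucc j.castSucc)
    (hcol : ∀ j : Fin n, W (Fin.last m) j.castSucc = 1 - ∑ i : Fin m, W i.castSucc j.castSucc)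
    (j : Fin n) :
    W (Fin.last m) j.castSucc =
      Q (Fin.last k) j.castSucc + assignedComp P Q (Fin.last m) j.castSucc := by
  have hcomp : ∑ i, assignedComp P Q i j.castSucc = ∑ l : Fin k, Q l.castSucc j.castSucc :=
    Matrix.sum_mul_apply_left_of_sum_eq_one _ hP.2.1 j.castSucc
  have hQcol := hQ.2.1 j
  rw [Fin.sum_univ_castSucc] at hcomp hQcol
  rw [hcol j, Finset.sum_congr rfl fun i _ => hreal i j]
  linarith

end AssignedComp

theorem composed_localization_le_general {nX nZ nY : ℕ}
    (dXY : Fin (nX + 1) → Fin (nY + 1) → ℝ)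
    (dXZ : Fin (nX + 1) → Fin (nZ + 1) → ℝ)
    (dZY : Fin (nZ + 1) → Fin (nY + 1) → ℝ)
    (hXYnn : ∀ i j, 0 ≤ dXY i j)
    (htri : ∀ i l j, dXY i j ≤ dXZ i l + dZY l j)
    (hrowid : ∀ i : Fin nX, dXY i.castSucc (Fin.last nY) = dXZ i.castSucc (Fin.last nZ))
    (hcolid : ∀ j : Fin nY, dXY (Fin.last nX) j.castSucc = dZY (Fin.last nZ) j.castSucc)
    (WXZ : Matrix (Fin (nX + 1)) (Fin (nZ + 1)) ℝ)
    (WZY : Matrix (Fin (nZ + 1)) (Fin (nY + 1)) ℝ)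
    (WXY : Matrix (Fin (nX + 1)) (Fin (nY + 1)) ℝ)
    (hXZ : memWbar WXZ) (hZY : memWbar WZY)
    (hreal : ∀ (i : Fin nX) (j : Fin nY),
      WXY i.castSucc j.castSucc =
        ∑ l : Fin nZ, WXZ i.castSucc l.castSucc * WZY l.castSucc j.castSucc)
    (hrow : ∀ i : Fin nX,
      WXY i.castSucc (Fin.last nY) = 1 - ∑ j : Fin nY, WXY i.castSucc j.castSucc)
    (hcol : ∀ j : Fin nY,
      WXY (Fin.last nX) j.castSucc = 1 - ∑ i : Fin nX, WXY i.castSucc j.castSucc)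
    (hcorner : WXY (Fin.last nX) (Fin.last nY) = 0) :
    ∑ i, ∑ j, dXY i j * WXY i j ≤
      (∑ i, ∑ l, dXZ i l * WXZ i l) + ∑ l, ∑ j, dZY l j * WZY l j := by
  have hcost := sum_cost_assignedComp_le dXY dXZ dZY htri hXZ hZY
  have hreal' : ∀ (i : Fin nX) (j : Fin nY),
      WXY i.castSucc j.castSucc = assignedComp WXZ WZY i.castSucc j.castSucc := hreal
  have hlastCol := apply_castSucc_last_eq_of_assignedComp hXZ hZY hreal' hrow
  have hlastRow := apply_last_castSucc_eq_of_assignedComp hXZ hZY hreal' hcol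
  have hcornerCost := mul_nonneg (hXYnn (Fin.last nX) (Fin.last nY))
    (assignedComp_nonneg hXZ hZY (Fin.last nX) (Fin.last nY))
  simp only [Fin.sum_univ_castSucc, hreal', hlastCol, hlastRow, hcorner, hrowid, hcolid,
    hXZ.2.2.2, hZY.2.2.2, mul_add, Finset.sum_add_distrib, mul_zero, add_zero] at hcost ⊢
  linarith

/-- Per-time-step localization cost inequality for `p = 1`: with the composed
matrix `W_{XY}` of Eq. (32), and base distances satisfying the triangle
inequality (including the unassigned-index identities), the localization cost
through `Z` upper-bounds the direct one. -/
theorem composed_localization_le {nX nZ nY : ℕ}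
    (dXY : Fin (nX + 1) → Fin (nY + 1) → ℝ)
    (dXZ : Fin (nX + 1) → Fin (nZ + 1) → ℝ)
    (dZY : Fin (nZ + 1) → Fin (nY + 1) → ℝ)
    (hXYnn : ∀ i j, 0 ≤ dXY i j) (hXZnn : ∀ i l, 0 ≤ dXZ i l)
    (hZYnn : ∀ l j, 0 ≤ dZY l j)
    (htri : ∀ i l j, dXY i j ≤ dXZ i l + dZY l j)
    (hrowid : ∀ i : Fin nX, dXY i.castSucc (Fin.last nY) = dXZ i.castSucc (Fin.last nZ))
    (hcolid : ∀ j : Fin nY, dXY (Fin.last nX) j.castSucc = dZY (Fin.last nZ) j.castSucc)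
    (WXZ : Matrix (Fin (nX + 1)) (Fin (nZ + 1)) ℝ)
    (WZY : Matrix (Fin (nZ + 1)) (Fin (nY + 1)) ℝ)
    (WXY : Matrix (Fin (nX + 1)) (Fin (nY + 1)) ℝ)
    (hXZ : memWbar WXZ) (hZY : memWbar WZY) (hXY : memWbar WXY)
    (hreal : ∀ (i : Fin nX) (j : Fin nY),
      WXY i.castSucc j.castSucc =
        ∑ l : Fin nZ, WXZ i.castSucc l.castSucc * WZY l.castSucc j.castSucc)
    (hrow : ∀ i : Fin nX,
      WXY i.castSucc (Fin.last nY) = 1 - ∑ j : Fin nY, WXY i.castSucc j.castSucc)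
    (hcol : ∀ j : Fin nY,
      WXY (Fin.last nX) j.castSucc = 1 - ∑ i : Fin nX, WXY i.castSucc j.castSucc)
    (hcorner : WXY (Fin.last nX) (Fin.last nY) = 0) :
    ∑ i, ∑ j, dXY i j * WXY i j ≤
      (∑ i, ∑ l, dXZ i l * WXZ i l) + ∑ l, ∑ j, dZY l j * WZY l j :=
  composed_localization_le_general dXY dXZ dZY hXYnn htri hrowid hcolid WXZ WZY WXY hXZ hZY hreal
    hrow hcol hcorner
end
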